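/- arXiv:0812.2026 — 2 statements merged into one kernel-verified Lean document; each statement's English description precedes it below -/
import Mathlib

section
/- Let L be a co-Heyting algebra and a, b ∈ L. Then mF(a \ b) = { p ∈ mF(a) | b ∉ p } and mF(a \ b) = mF(a) ∩ F(a \ b), where F(x) denotes the set of prime filters of L containing x and mF(x) denotes the set of elements of F(x) that are minimal with respect to inclusion among prime filters containing x. -/
/-- A prime filter of a bounded lattice: upward closed, closed under `⊓`,
contains `⊤`, does not contain `⊥`, and prime with respect to `⊔`. -/
def IsPrimeFilter {L : Type*} [Lattice L] [BoundedOrder L] (p : Set L) : Prop :=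
  (∀ x ∈ p, ∀ y : L, x ≤ y → y ∈ p) ∧
  (∀ x ∈ p, ∀ y ∈ p, x ⊓ y ∈ p) ∧
  (⊤ : L) ∈ p ∧ (⊥ : L) ∉ p ∧
  ∀ x y : L, x ⊔ y ∈ p → x ∈ p ∨ y ∈ p

/-- `dim a ≥ n`: there is a strictly increasing chain `p 0 ⊊ p 1 ⊊ ⋯ ⊊ p n`
of prime filters with `a ∈ p 0`. -/
def DimGE {L : Type*} [Lattice L] [BoundedOrder L] (a : L) (n : ℕ) : Prop :=
  ∃ p : Fin (n + 1) → Set L, (∀ i, IsPrimeFilter (p i)) ∧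
    (∀ i j : Fin (n + 1), i < j → p i ⊂ p j) ∧ a ∈ p 0

/-- `codim a ≥ n`: every prime filter `p` containing `a` admits a strictly
increasing chain `q n ⊊ ⋯ ⊊ q 1 ⊊ q 0 = p` of prime filters. -/
def CodimGE {L : Type*} [Lattice L] [BoundedOrder L] (a : L) (n : ℕ) : Prop :=
  ∀ p : Set L, IsPrimeFilter p → a ∈ p →
    ∃ q : Fin (n + 1) → Set L, (∀ i, IsPrimeFilter (q i)) ∧
      (∀ i j : Fin (n + 1), i < j → q j ⊂ q i) ∧ q 0 = p

/-- The strong order: `b ≪ a` iff for every `c`, `a ≤ b ⊔ c` implies `a ≤ c`. -/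
def StrongBelow {L : Type*} [Lattice L] (b a : L) : Prop :=
  ∀ c : L, a ≤ b ⊔ c → a ≤ c

/-- `F a` is the set of prime filters containing `a`. -/
def primeF {L : Type*} [Lattice L] [BoundedOrder L] (a : L) : Set (Set L) :=
  {p | IsPrimeFilter p ∧ a ∈ p}

/-- `mF a` is the set of minimal elements of `F a` with respect to inclusion. -/
def minPrimeF {L : Type*} [Lattice L] [BoundedOrder L] (a : L) : Set (Set L) :=
  {p ∈ primeF a | ∀ q ∈ primeF a, q ⊆ p → q = p}

/-!
A minimal prime filter `p` over `x` in a bounded distributive lattice is tight: for every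
`y ∈ p` there is `z ∉ p` with `x ≤ y ⊔ z`. Otherwise the ideal generated by `y` and the
complement of `p` misses the principal filter of `x`, and the prime ideal theorem separates them
by a prime ideal whose complement is a prime filter over `x`, strictly inside `p`.
In a co-Heyting algebra tightness reads `y ∈ p → x \ y ∉ p`. Since `a \ b ≤ a ≤ b ⊔ a \ b`, a
minimal prime filter over `a` contains `a \ b` exactly when it avoids `b`, and a minimal prime
filter over `a \ b` avoids `b` because `(a \ b) \ b = a \ b`.
-/

section Lattice

variable {L : Type*} [Lattice L] [BoundedOrder L] {p : Set L} {x y : L}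

namespace IsPrimeFilter

lemma mem_of_le (hp : IsPrimeFilter p) (hx : x ∈ p) (hxy : x ≤ y) : y ∈ p :=
  hp.1 x hx y hxy

lemma bot_notMem (hp : IsPrimeFilter p) : (⊥ : L) ∉ p :=
  hp.2.2.2.1

lemma mem_or_mem (hp : IsPrimeFilter p) (h : x ⊔ y ∈ p) : x ∈ p ∨ y ∈ p :=
  hp.2.2.2.2 x y h

lemma sup_notMem (hp : IsPrimeFilter p) (hx : x ∉ p) (hy : y ∉ p) : x ⊔ y ∉ p :=
  fun h => (hp.mem_or_mem h).elim hx hy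

lemma isIdeal_setOf_le_sup_compl (hp : IsPrimeFilter p) (y : L) :
    Order.IsIdeal {w | ∃ c ∉ p, w ≤ y ⊔ c} where
  IsLowerSet _ _ hvw := fun ⟨c, hc, hw⟩ => ⟨c, hc, hvw.trans hw⟩
  Nonempty := ⟨⊥, ⊥, hp.bot_notMem, bot_le⟩
  Directed := by
    rintro w₁ ⟨c₁, hc₁, h₁⟩ w₂ ⟨c₂, hc₂, h₂⟩
    refine ⟨w₁ ⊔ w₂, ⟨c₁ ⊔ c₂, hp.sup_notMem hc₁ hc₂, sup_le ?_ ?_⟩, le_sup_left, le_sup_right⟩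
    · exact h₁.trans (sup_le_sup_left le_sup_left y)
    · exact h₂.trans (sup_le_sup_left le_sup_right y)

end IsPrimeFilter

lemma Order.Ideal.IsPrime.isPrimeFilter_compl {J : Order.Ideal L} (hJ : J.IsPrime) :
    IsPrimeFilter (J : Set L)ᶜ := by
  refine ⟨fun u hu v huv hv => hu (J.lower huv hv),
    fun u hu v hv huv => (hJ.mem_or_mem huv).elim hu hv,
    hJ.top_notMem, fun h => h J.bot_mem, fun u v huv => ?_⟩
  by_contra! h
  exact huv (J.sup_mem (not_not.mp h.1) (not_not.mp h.2))

lemma mem_minPrimeF_of_le (hyx : y ≤ x) (hp : p ∈ minPrimeF x) (hy : y ∈ p) :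
    p ∈ minPrimeF y :=
  ⟨⟨hp.1.1, hy⟩, fun q hq hqp => hp.2 q ⟨hq.1, hq.1.mem_of_le hq.2 hyx⟩ hqp⟩

end Lattice

lemma exists_notMem_le_sup_of_mem_minPrimeF {L : Type*} [DistribLattice L] [BoundedOrder L]
    {x y : L} {p : Set L} (hp : p ∈ minPrimeF x) (hy : y ∈ p) : ∃ z ∉ p, x ≤ y ⊔ z := by
  by_contra! h
  have hI := hp.1.1.isIdeal_setOf_le_sup_compl y
  have hdisj : Disjoint (Order.PFilter.principal x : Set L) hI.toIdeal := by
    rw [Set.disjoint_left]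
    rintro w hxw ⟨c, hc, hw⟩
    exact h c hc (le_trans hxw hw)
  obtain ⟨J, hJ, hIJ, hxJ⟩ := DistribLattice.prime_ideal_of_disjoint_filter_ideal hdisj
  have hx : x ∉ (J : Set L) := Set.disjoint_left.mp hxJ (le_refl x)
  have hJp : (J : Set L)ᶜ ⊆ p := fun w hw => by
    by_contra hwp
    exact hw (hIJ ⟨w, hwp, le_sup_right⟩)
  have hJp_eq : (J : Set L)ᶜ = p := hp.2 _ ⟨hJ.isPrimeFilter_compl, hx⟩ hJp
  exact (hJp_eq ▸ hy) (hIJ ⟨⊥, hp.1.1.bot_notMem, le_sup_left⟩)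

section CoheytingAlgebra

variable {L : Type*} [CoheytingAlgebra L] {a b : L} {p : Set L}

lemma sdiff_notMem_of_mem_minPrimeF (hp : p ∈ minPrimeF a) (hb : b ∈ p) : a \ b ∉ p := by
  obtain ⟨z, hz, hle⟩ := exists_notMem_le_sup_of_mem_minPrimeF hp hb
  exact fun h => hz (hp.1.1.mem_of_le h (sdiff_le_iff.mpr hle))

lemma IsPrimeFilter.sdiff_mem (hp : IsPrimeFilter p) (ha : a ∈ p) (hb : b ∉ p) : a \ b ∈ p :=
  (hp.mem_or_mem (hp.mem_of_le ha le_sup_sdiff)).resolve_left hb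

lemma sdiff_mem_iff_of_mem_minPrimeF (hp : p ∈ minPrimeF a) : a \ b ∈ p ↔ b ∉ p :=
  ⟨fun h hb => sdiff_notMem_of_mem_minPrimeF hp hb h, hp.1.1.sdiff_mem hp.1.2⟩

lemma notMem_of_mem_minPrimeF_sdiff (hp : p ∈ minPrimeF (a \ b)) : b ∉ p := fun hb =>
  sdiff_notMem_of_mem_minPrimeF hp hb (by rw [sdiff_idem]; exact hp.1.2)

lemma mem_minPrimeF_of_mem_minPrimeF_sdiff (hp : p ∈ minPrimeF (a \ b)) : p ∈ minPrimeF a := by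
  refine ⟨⟨hp.1.1, hp.1.1.mem_of_le hp.1.2 sdiff_le⟩, fun q hq hqp => hp.2 q ⟨hq.1, ?_⟩ hqp⟩
  exact hq.1.sdiff_mem hq.2 fun hb => notMem_of_mem_minPrimeF_sdiff hp (hqp hb)

lemma mem_minPrimeF_sdiff_iff : p ∈ minPrimeF (a \ b) ↔ p ∈ minPrimeF a ∧ b ∉ p :=
  ⟨fun hp => ⟨mem_minPrimeF_of_mem_minPrimeF_sdiff hp, notMem_of_mem_minPrimeF_sdiff hp⟩,
    fun ⟨hp, hb⟩ => mem_minPrimeF_of_le sdiff_le hp ((sdiff_mem_iff_of_mem_minPrimeF hp).2 hb)⟩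

end CoheytingAlgebra

theorem stmt4 {L : Type*} [CoheytingAlgebra L] (a b : L) :
    minPrimeF (a \ b) = {p ∈ minPrimeF a | b ∉ p} ∧
    minPrimeF (a \ b) = minPrimeF a ∩ primeF (a \ b) := by
  refine ⟨Set.ext fun p => mem_minPrimeF_sdiff_iff, Set.ext fun p => ?_⟩
  rw [mem_minPrimeF_sdiff_iff, Set.mem_inter_iff]
  refine and_congr_right fun hp => ?_
  rw [← sdiff_mem_iff_of_mem_minPrimeF hp]
  exact ⟨fun h => ⟨hp.1.1, h⟩, And.right⟩
end

section
/- Let L be a precompact Hausdorff co-Heyting algebra. Then the set of join irreducible elements of L satisfies the ascending chain condition: there is no sequence (x_n)_{n∈ℕ} of join irreducible elements of L with x_n < x_{n+1} for all n. -/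
/-- A co-Heyting algebra is Hausdorff (for the codimetric topology) iff
`⊥` is the only element of infinite codimension, i.e. `⋂_d dL = {⊥}`. -/
def CHAHausdorff (L : Type*) [CoheytingAlgebra L] : Prop :=
  ∀ a : L, (∀ d : ℕ, CodimGE a d) → a = ⊥

/-- A co-Heyting algebra is precompact iff for every `d` the equivalence
relation `a ≡_d b ⇔ a Δ b ∈ dL` has finitely many classes, i.e. admits a
finite set of representatives. -/
def CHAPrecompact (L : Type*) [CoheytingAlgebra L] : Prop :=
  ∀ d : ℕ, ∃ F : Finset L, ∀ a : L, ∃ b ∈ F, CodimGE (symmDiff a b) d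

/-- `x` is join irreducible: nonzero, and `x ≤ a ⊔ b` implies `x ≤ a` or `x ≤ b`. -/
def JoinIrred {L : Type*} [Lattice L] [BoundedOrder L] (x : L) : Prop :=
  x ≠ ⊥ ∧ ∀ a b : L, x ≤ a ⊔ b → x ≤ a ∨ x ≤ b

/-!
If `x 0 < x 1 < ⋯` are join irreducible, then for `m < n` the element `x n` lies below
`x m ∆ x n`: it cannot lie below `x m`, so it lies below `x n \ x m`. Precompactness gives,
for every `d`, indices `m < n` with `x m ≡_d x n`, i.e. `codim (x m ∆ x n) ≥ d`; hence
`codim (x 0) ≥ codim (x n) ≥ d` for every `d`, and the Hausdorff property forces `x 0 = ⊥`.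
-/

section Codim

variable {L : Type*} [Lattice L] [BoundedOrder L] {a b : L} {d : ℕ}

theorem CodimGE.of_le (hb : CodimGE b d) (h : a ≤ b) : CodimGE a d :=
  fun p hp ha => hb p hp (hp.1 a ha b h)

theorem CodimGE.sup (ha : CodimGE a d) (hb : CodimGE b d) : CodimGE (a ⊔ b) d :=
  fun p hp hab => (hp.2.2.2.2 a b hab).elim (ha p hp) (hb p hp)

end Codim

theorem CodimGE.symmDiff_trans {L : Type*} [CoheytingAlgebra L] {a b c : L} {d : ℕ}
    (hab : CodimGE (symmDiff a b) d) (hbc : CodimGE (symmDiff b c) d) :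
    CodimGE (symmDiff a c) d :=
  (hab.sup hbc).of_le (symmDiff_triangle a b c)

theorem JoinIrred.le_symmDiff_of_lt {L : Type*} [CoheytingAlgebra L] {u v : L}
    (hv : JoinIrred v) (huv : u < v) : v ≤ symmDiff u v := by
  rcases hv.2 u (v \ u) le_sup_sdiff with h | h
  · exact absurd h huv.not_ge
  · exact h.trans le_sup_right

theorem CHAPrecompact.exists_lt_codimGE_symmDiff {L : Type*} [CoheytingAlgebra L]
    (hpc : CHAPrecompact L) (x : ℕ → L) (d : ℕ) :
    ∃ m n, m < n ∧ CodimGE (symmDiff (x m) (x n)) d := by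
  obtain ⟨F, hF⟩ := hpc d
  choose f hfF hfx using fun n => hF (x n)
  obtain ⟨m, n, hmn, hfeq⟩ :=
    Finite.exists_ne_map_eq_of_infinite fun n => (⟨f n, hfF n⟩ : F)
  have hfeq : f m = f n := congrArg Subtype.val hfeq
  have hsymm : ∀ i j, f i = f j → CodimGE (symmDiff (x i) (x j)) d := fun i j h =>
    (hfx i).symmDiff_trans (h ▸ symmDiff_comm (x j) (f j) ▸ hfx j)
  rcases hmn.lt_or_gt with h | h
  · exact ⟨m, n, h, hsymm m n hfeq⟩
  · exact ⟨n, m, h, hsymm n m hfeq.symm⟩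

theorem stmt16 {L : Type*} [CoheytingAlgebra L]
    (hpc : CHAPrecompact L) (hh : CHAHausdorff L) :
    ¬ ∃ x : ℕ → L, (∀ n, JoinIrred (x n)) ∧ ∀ n, x n < x (n + 1) := by
  rintro ⟨x, hji, hlt⟩
  have hmono : StrictMono x := strictMono_nat_of_lt_succ hlt
  have hcodim : ∀ d, CodimGE (x 0) d := fun d => by
    obtain ⟨m, n, hmn, hmn_codim⟩ := hpc.exists_lt_codimGE_symmDiff x d
    exact (hmn_codim.of_le ((hji n).le_symmDiff_of_lt (hmono hmn))).of_le
      (hmono.monotone n.zero_le)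
  exact (hji 0).1 (hh (x 0) hcodim)
end
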